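/- Fix an integer K ≥ 1 and a nonempty finite set U ⊆ [0, 2π], and let q(U) ∈ ℝ^K have coordinates q_k(U) = max_{u ∈ U} h_k(u). Then the set ζ(q(U)) is within directed Hausdorff distance 2π/K of U in both directions: d_H(U, ζ(q(U))) ≤ 2π/K and d_H(ζ(q(U)), U) ≤ 2π/K. -/

import Mathlib

open Real Set

/-- The angular distance between two angles. -/
noncomputable def angDist (u v : ℝ) : ℝ := min |u - v| (2 * π - |u - v|)

/-- Directed Hausdorff distance between two (nonempty) finite sets of angles:
`dH S S' = max_{u' ∈ S'} min_{u ∈ S} angDist u u'` (junk value `0` if either set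
is empty). -/
noncomputable def dirHaus (S S' : Finset ℝ) : ℝ :=
  if h : S.Nonempty ∧ S'.Nonempty then
    S'.sup' h.2 (fun u' => S.inf' h.1 (fun u => angDist u u'))
  else 0

/-- The `k`-th grid interval `I_k = [2π(k-1)/K, 2πk/K]`. -/
noncomputable def gridInterval (K k : ℕ) : Set ℝ :=
  Icc (2 * π * ((k : ℝ) - 1) / K) (2 * π * (k : ℝ) / K)

/-- Angular distance from an angle `u` to the interval `I_k`. -/
noncomputable def distToInterval (K k : ℕ) (u : ℝ) : ℝ :=
  sInf (angDist u '' gridInterval K k)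

/-- Soft indicator of the `k`-th grid interval. -/
noncomputable def softInd (K k : ℕ) (u : ℝ) : ℝ :=
  Real.exp (-(distToInterval K k u))

/-- The occupancy vector `q(U) ∈ ℝ^K` of a finite set of angles `U`; its
coordinate indexed by `j : Fin K` is `q_{j+1}(U) = max_{u ∈ U} h_{j+1}(u)`
(junk value `0` if `U` is empty). -/
noncomputable def occVec (K : ℕ) (U : Finset ℝ) : Fin K → ℝ :=
  fun j => if h : U.Nonempty then U.sup' h (softInd K (j.val + 1)) else 0

/-- `ζ` maps a vector `q ∈ ℝ^K` to the finite set of left endpoints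
`{2π(k-1)/K : 1 ≤ k ≤ K, q_k ≥ 1}`, where coordinate `j : Fin K` corresponds
to `k = j + 1`. -/
noncomputable def zeta (K : ℕ) (q : Fin K → ℝ) : Finset ℝ :=
  (Finset.univ.filter (fun j : Fin K => 1 ≤ q j)).image
    (fun j : Fin K => 2 * π * (j.val : ℝ) / K)

/-!
If some `u ∈ U` lies in `I_{j+1}`, then `h_{j+1}(u) = 1`, so the left endpoint `2πj/K` of
`I_{j+1}` belongs to `ζ(q(U))` and lies within the length `2π/K` of `I_{j+1}` from `u`; as the
intervals `I_1, …, I_K` cover `[0, 2π]`, every point of `U` is close to `ζ(q(U))`. Conversely,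
`q_{j+1}(U) ≥ 1` forces `dist(u, I_{j+1}) = 0` for some `u ∈ U`, and the triangle inequality for
`d_A` against the points of `I_{j+1}` puts `2πj/K` within `2π/K` of `u`.
-/

lemma angDist_self (u : ℝ) : angDist u u = 0 := by
  simp [angDist, pi_pos.le]

lemma angDist_le_abs_sub (u v : ℝ) : angDist u v ≤ |u - v| := min_le_left _ _

lemma angDist_nonneg_of_abs_sub_le {u v : ℝ} (h : |u - v| ≤ 2 * π) : 0 ≤ angDist u v :=
  le_min (abs_nonneg _) (by linarith)

lemma angDist_le_add_abs_sub (u v w : ℝ) : angDist u w ≤ angDist u v + |v - w| := by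
  have huw := abs_sub_le u v w
  have huv := abs_sub_le u w v
  rw [abs_sub_comm w v] at huv
  rcases le_total |u - v| (2 * π - |u - v|) with h | h
  · rw [angDist, angDist, min_eq_left h]
    exact (min_le_left _ _).trans huw
  · rw [angDist, angDist, min_eq_right h]
    exact (min_le_right _ _).trans (by linarith)

-- `angDist u v < 0` once `|u - v| > 2π`, so `hS` is what makes the image bounded below.
lemma sInf_image_angDist_nonpos {S : Set ℝ} {u : ℝ} (hu : u ∈ S)
    (hS : ∀ v ∈ S, |u - v| ≤ 2 * π) : sInf (angDist u '' S) ≤ 0 := by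
  have hbdd : BddBelow (angDist u '' S) := by
    refine ⟨0, ?_⟩
    rintro _ ⟨v, hv, rfl⟩
    exact angDist_nonneg_of_abs_sub_le (hS v hv)
  simpa [angDist_self] using csInf_le hbdd ⟨u, hu, angDist_self u⟩

lemma angDist_le_sInf_image_add {S : Set ℝ} (hS : S.Nonempty) {x r : ℝ}
    (hx : ∀ v ∈ S, |v - x| ≤ r) (u : ℝ) :
    angDist u x ≤ sInf (angDist u '' S) + r := by
  suffices angDist u x - r ≤ sInf (angDist u '' S) by linarith
  refine le_csInf (hS.image _) ?_
  rintro _ ⟨v, hv, rfl⟩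
  linarith [angDist_le_add_abs_sub u v x, hx v hv]

lemma dirHaus_le {S S' : Finset ℝ} {r : ℝ} (hr : 0 ≤ r)
    (h : ∀ u' ∈ S', ∃ u ∈ S, angDist u u' ≤ r) : dirHaus S S' ≤ r := by
  unfold dirHaus
  split_ifs with hne
  · exact Finset.sup'_le _ _ fun u' hu' ↦ (Finset.inf'_le_iff _).2 (h u' hu')
  · exact hr

lemma exists_nat_lt_mem_Icc {K : ℕ} (hK : 0 < K) {t : ℝ} (ht : t ∈ Icc (0 : ℝ) K) :
    ∃ j < K, t ∈ Icc (j : ℝ) (j + 1) := by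
  rcases ht.2.lt_or_eq with hlt | rfl
  · exact ⟨⌊t⌋₊, (Nat.floor_lt ht.1).2 hlt, Nat.floor_le ht.1, (Nat.lt_floor_add_one t).le⟩
  · refine ⟨K - 1, Nat.sub_lt hK one_pos, ?_, ?_⟩ <;> simp [Nat.cast_sub (Nat.one_le_of_lt hK)]

lemma two_pi_div_natCast_le (K : ℕ) : 2 * π / K ≤ 2 * π := by
  rcases K.eq_zero_or_pos with rfl | hK
  · simp [pi_pos.le]
  · exact div_le_self (by positivity) (by exact_mod_cast hK)

lemma abs_sub_le_of_mem_gridInterval {K k : ℕ} {u v : ℝ} (hu : u ∈ gridInterval K k)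
    (hv : v ∈ gridInterval K k) : |u - v| ≤ 2 * π / K :=
  (abs_sub_le_of_le_of_le hu.1 hu.2 hv.1 hv.2).trans_eq (by ring)

lemma gridInterval_succ (K j : ℕ) :
    gridInterval K (j + 1) = Icc (2 * π * j / K) (2 * π * j / K + 2 * π / K) := by
  rw [gridInterval]
  push_cast
  congr 1 <;> ring

lemma left_mem_gridInterval_succ (K j : ℕ) : 2 * π * j / K ∈ gridInterval K (j + 1) := by
  rw [gridInterval_succ]
  exact ⟨le_rfl, by simp only [le_add_iff_nonneg_right]; positivity⟩

lemma exists_mem_gridInterval {K : ℕ} (hK : 0 < K) {u : ℝ} (hu : u ∈ Icc 0 (2 * π)) :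
    ∃ j : Fin K, u ∈ gridInterval K (j + 1) := by
  have hK' : (0 : ℝ) < K := by exact_mod_cast hK
  have h2π : 0 < 2 * π := by positivity
  have ht : u * K / (2 * π) ∈ Icc (0 : ℝ) K := by
    refine ⟨by have := hu.1; positivity, ?_⟩
    rw [div_le_iff₀ h2π]
    nlinarith [hu.2]
  obtain ⟨j, hj, hlo, hhi⟩ := exists_nat_lt_mem_Icc hK ht
  refine ⟨⟨j, hj⟩, ?_⟩
  rw [gridInterval, Fin.val_mk, Nat.cast_add_one, add_sub_cancel_right]
  rw [le_div_iff₀ h2π] at hlo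
  rw [div_le_iff₀ h2π] at hhi
  constructor
  · rw [div_le_iff₀ hK']; linarith
  · rw [le_div_iff₀ hK']; linarith

lemma distToInterval_nonpos {K k : ℕ} {u : ℝ} (hu : u ∈ gridInterval K k) :
    distToInterval K k u ≤ 0 :=
  sInf_image_angDist_nonpos hu fun _ hv ↦
    (abs_sub_le_of_mem_gridInterval hu hv).trans (two_pi_div_natCast_le K)

lemma angDist_left_le_distToInterval_add (K j : ℕ) (u : ℝ) :
    angDist u (2 * π * j / K) ≤ distToInterval K (j + 1) u + 2 * π / K :=
  angDist_le_sInf_image_add ⟨_, left_mem_gridInterval_succ K j⟩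
    (fun _ hv ↦ abs_sub_le_of_mem_gridInterval hv (left_mem_gridInterval_succ K j)) u

lemma one_le_softInd_iff {K k : ℕ} {u : ℝ} : 1 ≤ softInd K k u ↔ distToInterval K k u ≤ 0 := by
  rw [softInd, one_le_exp_iff, neg_nonneg]

lemma one_le_occVec_iff {K : ℕ} {U : Finset ℝ} {j : Fin K} :
    1 ≤ occVec K U j ↔ ∃ u ∈ U, distToInterval K (j + 1) u ≤ 0 := by
  unfold occVec
  split_ifs with hne
  · simp only [Finset.le_sup'_iff, one_le_softInd_iff]
  · simp [Finset.not_nonempty_iff_eq_empty.1 hne]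

lemma mem_zeta {K : ℕ} {q : Fin K → ℝ} {x : ℝ} :
    x ∈ zeta K q ↔ ∃ j : Fin K, 1 ≤ q j ∧ 2 * π * j / K = x := by
  simp [zeta]

theorem dirHaus_zeta_occVec_le_general (K : ℕ) (hK : 1 ≤ K) (U : Finset ℝ)
    (hU : ↑U ⊆ Icc (0 : ℝ) (2 * π)) :
    dirHaus U (zeta K (occVec K U)) ≤ 2 * π / K ∧
      dirHaus (zeta K (occVec K U)) U ≤ 2 * π / K := by
  have hr : (0 : ℝ) ≤ 2 * π / K := by positivity
  constructor
  · refine dirHaus_le hr fun x hx ↦ ?_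
    obtain ⟨j, hj, rfl⟩ := mem_zeta.1 hx
    obtain ⟨u, hu, hd⟩ := one_le_occVec_iff.1 hj
    exact ⟨u, hu, by linarith [angDist_left_le_distToInterval_add K j u]⟩
  · refine dirHaus_le hr fun u hu ↦ ?_
    obtain ⟨j, hj⟩ := exists_mem_gridInterval hK (hU hu)
    have hz : 2 * π * j / K ∈ zeta K (occVec K U) :=
      mem_zeta.2 ⟨j, one_le_occVec_iff.2 ⟨u, hu, distToInterval_nonpos hj⟩, rfl⟩
    refine ⟨_, hz, (angDist_le_abs_sub _ _).trans ?_⟩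
    exact abs_sub_le_of_mem_gridInterval (left_mem_gridInterval_succ K j) hj

theorem dirHaus_zeta_occVec_le (K : ℕ) (hK : 1 ≤ K) (U : Finset ℝ)
    (hne : U.Nonempty) (hU : ↑U ⊆ Icc (0 : ℝ) (2 * π)) :
    dirHaus U (zeta K (occVec K U)) ≤ 2 * π / K ∧
      dirHaus (zeta K (occVec K U)) U ≤ 2 * π / K :=
  dirHaus_zeta_occVec_le_general K hK U hU
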